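/- arXiv:2005.13405 — 2 statements merged into one kernel-verified Lean document; each statement's English description precedes it below -/
import Mathlib

section
/- Let Ω ⊂ ℝ be open, u: Ω → ℝ locally Lipschitz, x₀ ∈ Ω, and suppose |∇⁻u|(x₀) ≤ f(x₀) where f ≥ 0. If ξ: ℝ → Ω is 1-Lipschitz with ξ(0) = x₀ and φ ∈ C¹(ℝ) is such that t ↦ u(ξ(t)) − φ(t) attains a local maximum at t = 0, then |φ'(0)| ≤ f(x₀). -/
/-!
Local Lipschitz continuity makes the difference quotients defining `subSlope u x₀` bounded
(otherwise the real `limsup` is a junk value and says nothing about them), so for every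
`C > f x₀` the limsup bound yields `u x₀ - u y ≤ C |x₀ - y|` near `x₀`. Along the 1-Lipschitz
curve `ξ` this becomes `u x₀ - u (ξ t) ≤ C |t|`, and the local maximum of `u ∘ ξ - φ` transfers
it to `φ 0 - φ t ≤ C |t|`. One-sided difference quotients of `φ` at `0` then give
`-C ≤ φ' 0 ≤ C`.
-/

open Filter Topology Set

/-- Sub-slope `|∇⁻u|(x) = limsup_{y→x} max{u(x)−u(y),0}/|x−y|`. -/
noncomputable def subSlope (u : ℝ → ℝ) (x : ℝ) : ℝ :=
  Filter.limsup (fun y => max (u x - u y) 0 / dist x y) (𝓝[≠] x)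

theorem LipschitzOnWith.isBoundedUnder_le_max_sub_div_dist {X : Type*} [PseudoMetricSpace X]
    {K : NNReal} {u : X → ℝ} {s : Set X} {x : X} (hu : LipschitzOnWith K u s) (hs : s ∈ 𝓝 x) :
    IsBoundedUnder (· ≤ ·) (𝓝 x) (fun y => max (u x - u y) 0 / dist x y) := by
  refine ⟨K, eventually_map.2 ?_⟩
  filter_upwards [hs] with y hy
  have hsub : u x - u y ≤ K * dist x y :=
    (le_abs_self _).trans (hu.dist_le_mul x (mem_of_mem_nhds hs) y hy)
  exact div_le_of_le_mul₀ dist_nonneg K.2 (max_le hsub (by positivity))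

theorem eventually_sub_le_mul_dist_of_subSlope_lt {u : ℝ → ℝ} {x C : ℝ}
    (hbdd : IsBoundedUnder (· ≤ ·) (𝓝[≠] x) (fun y => max (u x - u y) 0 / dist x y))
    (h : subSlope u x < C) : ∀ᶠ y in 𝓝 x, u x - u y ≤ C * dist x y := by
  filter_upwards [eventually_nhdsWithin_iff.1 (eventually_lt_of_limsup_lt h hbdd)] with y hy
  rcases eq_or_ne y x with rfl | hyx
  · simp
  · have hdist : 0 < dist x y := dist_pos.2 hyx.symm
    calc u x - u y ≤ max (u x - u y) 0 := le_max_left _ _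
      _ ≤ C * dist x y := ((div_lt_iff₀ hdist).1 (hy hyx)).le

theorem HasDerivWithinAt.neg_le_of_eventually_sub_le {φ : ℝ → ℝ} {φ' a C : ℝ}
    (hφ : HasDerivWithinAt φ φ' (Ioi a) a) (h : ∀ᶠ t in 𝓝[>] a, φ a - φ t ≤ C * (t - a)) :
    -C ≤ φ' := by
  refine ge_of_tendsto ((hasDerivWithinAt_iff_tendsto_slope' self_notMem_Ioi).1 hφ) ?_
  filter_upwards [h, self_mem_nhdsWithin] with t ht (hat : a < t)
  rw [slope_def_field, le_div_iff₀ (sub_pos.2 hat)]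
  linarith

theorem HasDerivWithinAt.le_of_eventually_sub_le {φ : ℝ → ℝ} {φ' a C : ℝ}
    (hφ : HasDerivWithinAt φ φ' (Iio a) a) (h : ∀ᶠ t in 𝓝[<] a, φ a - φ t ≤ C * (a - t)) :
    φ' ≤ C := by
  refine le_of_tendsto ((hasDerivWithinAt_iff_tendsto_slope' self_notMem_Iio).1 hφ) ?_
  filter_upwards [h, self_mem_nhdsWithin] with t ht (hta : t < a)
  rw [slope_def_field, div_le_iff_of_neg (sub_neg.2 hta)]
  linarith

theorem HasDerivAt.abs_le_of_eventually_sub_le {φ : ℝ → ℝ} {φ' a C : ℝ}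
    (hφ : HasDerivAt φ φ' a) (h : ∀ᶠ t in 𝓝 a, φ a - φ t ≤ C * |t - a|) : |φ'| ≤ C := by
  refine abs_le.2 ⟨hφ.hasDerivWithinAt.neg_le_of_eventually_sub_le ?_,
    hφ.hasDerivWithinAt.le_of_eventually_sub_le ?_⟩
  · filter_upwards [nhdsWithin_le_nhds h, self_mem_nhdsWithin] with t ht (hat : a < t)
    rwa [abs_of_pos (sub_pos.2 hat)] at ht
  · filter_upwards [nhdsWithin_le_nhds h, self_mem_nhdsWithin] with t ht (hta : t < a)
    rwa [abs_of_neg (sub_neg.2 hta), neg_sub] at ht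

theorem monge_subsolution_is_c_subsolution_general
    (Ω : Set ℝ) (hΩ : IsOpen Ω) (u f : ℝ → ℝ) (hf0 : ∀ x, 0 ≤ f x)
    (huLip : ∀ x ∈ Ω, ∃ ε > (0 : ℝ), ∃ K : NNReal,
      LipschitzOnWith K u (Metric.ball x ε ∩ Ω))
    (x₀ : ℝ) (hx₀ : x₀ ∈ Ω) (hmonge : subSlope u x₀ ≤ f x₀)
    (ξ : ℝ → ℝ) (hξ : LipschitzWith 1 ξ)
    (hξ0 : ξ 0 = x₀)
    (φ : ℝ → ℝ) (hφ : ContDiff ℝ 1 φ)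
    (hmax : IsLocalMax (fun t => u (ξ t) - φ t) 0) :
    |deriv φ 0| ≤ f x₀ := by
  obtain ⟨r, hr, K, hK⟩ := huLip x₀ hx₀
  have hbdd := hK.isBoundedUnder_le_max_sub_div_dist
    (inter_mem (Metric.ball_mem_nhds x₀ hr) (hΩ.mem_nhds hx₀))
  have hξ_tendsto : Tendsto ξ (𝓝 0) (𝓝 x₀) := hξ0 ▸ hξ.continuous.tendsto 0
  refine le_of_forall_pos_le_add fun ε hε => ?_
  have hu : ∀ᶠ y in 𝓝 x₀, u x₀ - u y ≤ (f x₀ + ε) * dist x₀ y :=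
    eventually_sub_le_mul_dist_of_subSlope_lt (hbdd.mono nhdsWithin_le_nhds) (by linarith)
  have hφ_le : ∀ᶠ t in 𝓝 0, φ 0 - φ t ≤ (f x₀ + ε) * |t - 0| := by
    filter_upwards [hξ_tendsto.eventually hu, hmax] with t hut hmax_t
    have hdist : dist x₀ (ξ t) ≤ |t - 0| := by
      simpa [hξ0, dist_comm, Real.dist_eq] using hξ.dist_le_mul t 0
    have hC : 0 ≤ f x₀ + ε := by linarith [hf0 x₀]
    have hmax_t : u (ξ t) - φ t ≤ u x₀ - φ 0 := by simpa [hξ0] using hmax_t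
    linarith [mul_le_mul_of_nonneg_left hdist hC]
  exact (hφ.differentiable one_ne_zero 0).hasDerivAt.abs_le_of_eventually_sub_le hφ_le

/-- a Monge subsolution is a curve-based subsolution along any
single admissible curve: if `|∇⁻u|(x₀) ≤ f(x₀)`, `ξ` is a 1-Lipschitz curve in
`Ω` with `ξ(0) = x₀`, and `φ ∈ C¹(ℝ)` is such that `t ↦ u(ξ(t)) − φ(t)` has a
local maximum at `t = 0`, then `|φ'(0)| ≤ f(x₀)`. -/
theorem monge_subsolution_is_c_subsolution
    (Ω : Set ℝ) (hΩ : IsOpen Ω) (u f : ℝ → ℝ) (hf0 : ∀ x, 0 ≤ f x)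
    (huLip : ∀ x ∈ Ω, ∃ ε > (0 : ℝ), ∃ K : NNReal,
      LipschitzOnWith K u (Metric.ball x ε ∩ Ω))
    (x₀ : ℝ) (hx₀ : x₀ ∈ Ω) (hmonge : subSlope u x₀ ≤ f x₀)
    (ξ : ℝ → ℝ) (hξ : LipschitzWith 1 ξ) (hξΩ : ∀ t : ℝ, ξ t ∈ Ω)
    (hξ0 : ξ 0 = x₀)
    (φ : ℝ → ℝ) (hφ : ContDiff ℝ 1 φ)
    (hmax : IsLocalMax (fun t => u (ξ t) - φ t) 0) :
    |deriv φ 0| ≤ f x₀ :=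
  monge_subsolution_is_c_subsolution_general Ω hΩ u f hf0 huLip x₀ hx₀ hmonge ξ hξ hξ0 φ hφ hmax
end

section
/- Let H: [0,∞) → ℝ be given by H(p) = 1 − |p − 2| + max{p − 3, 0}². Then u(x) = −3|x| on ℝ is a Monge solution of H(|∇⁻u|) = 0, i.e., |∇⁻u|(x) = 3 and H(3) = 0 for all x ∈ ℝ; in particular |∇⁻u|(0) = 3. -/
open Filter Topology Set

/-- The Hamiltonian `H(p) = 1 − |p − 2| + max{p − 3, 0}²`. -/
noncomputable def Ham (p : ℝ) : ℝ := 1 - |p - 2| + max (p - 3) 0 ^ 2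

lemma subSlope_eq_three (x : ℝ) : subSlope (fun z : ℝ => -3 * |z|) x = 3 := by
  set f : ℝ → ℝ := fun y => max ((-3 * |x|) - (-3 * |y|)) 0 / dist x y with hf
  have hub : ∀ y : ℝ, y ≠ x → f y ≤ 3 := by
    intro y hy
    have hd : (0:ℝ) < dist x y := dist_pos.mpr (Ne.symm hy)
    rw [div_le_iff₀ hd]
    have h1 : |y| - |x| ≤ |y - x| := abs_sub_abs_le_abs_sub y x
    have h2 : dist x y = |y - x| := by rw [dist_comm, Real.dist_eq]
    apply max_le
    · nlinarith
    · positivity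
  have hubev : ∀ᶠ y in 𝓝[≠] x, f y ≤ 3 :=
    eventually_mem_nhdsWithin.mono fun y hy => hub y hy
  have hfreq : ∃ᶠ y in 𝓝[≠] x, 3 ≤ f y := by
    rcases le_or_gt 0 x with hx | hx
    · -- approach from the right
      have hev : ∀ᶠ y in 𝓝[>] x, 3 ≤ f y := by
        filter_upwards [self_mem_nhdsWithin] with y (hy : x < y)
        have hd : dist x y = y - x := by
          rw [Real.dist_eq, abs_of_neg (by linarith)]; ring
        have hay : |y| = y := abs_of_pos (lt_of_le_of_lt hx hy)
        have hax : |x| = x := abs_of_nonneg hx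
        have : f y = 3 := by
          simp only [hf, hd, hay, hax]
          rw [max_eq_left (by nlinarith), div_eq_iff (by linarith : y - x ≠ 0)]
          ring
        linarith [this.ge]
      exact (hev.frequently).filter_mono (nhdsWithin_mono x fun y (hy : x < y) => ne_of_gt hy)
    · have hev : ∀ᶠ y in 𝓝[<] x, 3 ≤ f y := by
        filter_upwards [self_mem_nhdsWithin] with y (hy : y < x)
        have hd : dist x y = x - y := by
          rw [Real.dist_eq, abs_of_pos (by linarith)]
        have hay : |y| = -y := abs_of_neg (lt_trans hy hx)
        have hax : |x| = -x := abs_of_neg hx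
        have : f y = 3 := by
          simp only [hf, hd, hay, hax]
          rw [max_eq_left (by nlinarith), div_eq_iff (by linarith : x - y ≠ 0)]
          ring
        linarith [this.ge]
      exact (hev.frequently).filter_mono (nhdsWithin_mono x fun y (hy : y < x) => ne_of_lt hy)
  have hle : subSlope (fun z : ℝ => -3 * |z|) x ≤ 3 := by
    apply Filter.limsup_le_of_le _ hubev
    · refine isCoboundedUnder_le_of_eventually_le _ (x := 0) ?_
      filter_upwards [eventually_mem_nhdsWithin] with y hy
      positivity
  have hge : 3 ≤ subSlope (fun z : ℝ => -3 * |z|) x :=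
    Filter.le_limsup_of_frequently_le hfreq ⟨3, hubev⟩
  exact le_antisymm hle hge

/-- `u(x) = −3|x|` is a Monge solution of `H(|∇⁻u|) = 0`:
`|∇⁻u|(x) = 3` and `H(3) = 0` at every `x ∈ ℝ`, in particular at `x = 0`. -/
theorem monge_solution_nonmonotone_example :
    (∀ x : ℝ, subSlope (fun z : ℝ => -3 * |z|) x = 3 ∧
      Ham (subSlope (fun z : ℝ => -3 * |z|) x) = 0) ∧
    subSlope (fun z : ℝ => -3 * |z|) 0 = 3 := by
  refine ⟨fun x => ⟨subSlope_eq_three x, ?_⟩, subSlope_eq_three 0⟩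
  rw [subSlope_eq_three x]
  norm_num [Ham]
end
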